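/- arXiv:2211.05282 — 2 statements merged into one kernel-verified Lean document; each statement's English description precedes it below -/
import Mathlib

section
/- Let A be a commutative integral domain equipped with an action of a group G by ring automorphisms, let H ≤ G be a subgroup (acting on A by restriction), and let f ∈ A be a nonzero element fixed by every element of G. Then the natural map from the tensor product A^H ⊗_{A^G} (A^G)_f to the fixed subring (A_f)^H of the induced H-action on the localization A_f — determined by sending a ⊗ (b/fⁿ) to ab/fⁿ — is an isomorphism of rings. Equivalently, the commutative square formed by the inclusions (A^G)_f → (A_f)^H arising from A^G ⊆ A^H and from localization is a pushout: localizing the H-fixed subring along the G-invariant element f computes the H-invariants of the localization. -/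
set_option maxHeartbeats 1000000
set_option synthInstance.maxHeartbeats 400000


open scoped TensorProduct

/-- The subring of elements of `A` fixed by every element of the subgroup `H` of `G`,
where `G` acts on `A` by ring automorphisms. -/
def fixedSubring {G : Type*} [Group G] (H : Subgroup G) (A : Type*) [CommRing A]
    [MulSemiringAction G A] : Subring A where
  carrier := {a | ∀ g ∈ H, g • a = a}
  one_mem' := fun g _ => smul_one g
  mul_mem' := fun {a b} ha hb g hg => by rw [smul_mul', ha g hg, hb g hg]
  zero_mem' := fun g _ => smul_zero g
  add_mem' := fun {a b} ha hb g hg => by rw [smul_add, ha g hg, hb g hg]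
  neg_mem' := fun {a} ha g hg => by rw [smul_neg, ha g hg]

/-- Let `A` be a commutative integral domain with an action of a group `G` by
ring automorphisms, `H ≤ G` a subgroup (acting by restriction), and `f ≠ 0` fixed by every
element of `G`.  Endow the localization `A_f` with the induced `G`-action, let `A^G ⊆ A^H` be
the fixed subrings (so `A^H` is an `A^G`-algebra via the inclusion), and let `(A^G)_f` be the
localization of `A^G` at the powers of `f`.  Then the natural map
`A^H ⊗_{A^G} (A^G)_f → (A_f)^H`, `a ⊗ (b / fⁿ) ↦ a b / fⁿ`, is a ring isomorphism. -/
theorem stmt_2 {A : Type*} [CommRing A] [IsDomain A] {G : Type*} [Group G]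
    [MulSemiringAction G A] (H : Subgroup G)
    (f : A) (hf : f ≠ 0) (hfix : ∀ g : G, g • f = f)
    [MulSemiringAction G (Localization.Away f)]
    (hcompat : ∀ (g : G) (a : A),
      g • (algebraMap A (Localization.Away f) a) = algebraMap A (Localization.Away f) (g • a))
    [Algebra (fixedSubring (⊤ : Subgroup G) A) (fixedSubring H A)]
    (halg : ∀ a : fixedSubring (⊤ : Subgroup G) A,
      ((algebraMap (fixedSubring (⊤ : Subgroup G) A) (fixedSubring H A) a : fixedSubring H A) : A)
        = (a : A)) :
    ∃ e : (fixedSubring H A) ⊗[fixedSubring (⊤ : Subgroup G) A]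
          (Localization.Away
            (⟨f, fun g _ => hfix g⟩ : fixedSubring (⊤ : Subgroup G) A))
        ≃+* fixedSubring H (Localization.Away f),
      ∀ (a : fixedSubring H A) (b : fixedSubring (⊤ : Subgroup G) A) (n : ℕ),
        ((e (a ⊗ₜ[fixedSubring (⊤ : Subgroup G) A]
            Localization.mk b
              (⟨(⟨f, fun g _ => hfix g⟩ : fixedSubring (⊤ : Subgroup G) A) ^ n, ⟨n, rfl⟩⟩ :
                Submonoid.powers
                  (⟨f, fun g _ => hfix g⟩ : fixedSubring (⊤ : Subgroup G) A))) :
          fixedSubring H (Localization.Away f)) : Localization.Away f)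
          = Localization.mk ((a : A) * (b : A)) (⟨f ^ n, ⟨n, rfl⟩⟩ : Submonoid.powers f) := by
    classical
  let fG : fixedSubring (⊤ : Subgroup G) A := ⟨f, fun g _ => hfix g⟩
  let fH : fixedSubring H A := ⟨f, fun g _ => hfix g⟩
  -- injectivity of A → L
  have injA : Function.Injective (algebraMap A (Localization.Away f)) :=
    IsLocalization.injective _ (powers_le_nonZeroDivisors_of_noZeroDivisors hf)
  have hfixpow : ∀ (g : G) (n : ℕ), g • (f ^ n) = f ^ n := fun g n => by
    rw [smul_pow', hfix]
  -- elements mk c (f^n) with c H-fixed are H-fixed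
  have hmkspec : ∀ (c : A) (n : ℕ),
      (Localization.mk c (⟨f ^ n, ⟨n, rfl⟩⟩ : Submonoid.powers f) : Localization.Away f)
        * algebraMap A (Localization.Away f) (f ^ n)
        = algebraMap A (Localization.Away f) c := by
    intro c n
    rw [Localization.mk_eq_mk']
    exact IsLocalization.mk'_spec (Localization.Away f) c
      (⟨f ^ n, ⟨n, rfl⟩⟩ : Submonoid.powers f)
  have mkmem : ∀ (c : A), (∀ g ∈ H, g • c = c) → ∀ n : ℕ,
      (Localization.mk c (⟨f ^ n, ⟨n, rfl⟩⟩ : Submonoid.powers f) : Localization.Away f)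
        ∈ fixedSubring H (Localization.Away f) := by
    intro c hc n g hg
    have hu : IsUnit (algebraMap A (Localization.Away f) (f ^ n)) :=
      IsLocalization.map_units (Localization.Away f) (⟨f ^ n, ⟨n, rfl⟩⟩ : Submonoid.powers f)
    apply hu.mul_left_injective
    calc g • Localization.mk c (⟨f ^ n, ⟨n, rfl⟩⟩ : Submonoid.powers f)
          * algebraMap A (Localization.Away f) (f ^ n)
        = g • (Localization.mk c (⟨f ^ n, ⟨n, rfl⟩⟩ : Submonoid.powers f)
            * algebraMap A (Localization.Away f) (f ^ n)) := by
          rw [smul_mul', hcompat, hfixpow]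
      _ = algebraMap A (Localization.Away f) c := by rw [hmkspec, hcompat, hc g hg]
      _ = _ := (hmkspec c n).symm
  -- the algebra map B → Q
  have hψmem : ∀ x : fixedSubring H A,
      algebraMap A (Localization.Away f) (x : A) ∈ fixedSubring H (Localization.Away f) := by
    intro x g hg
    rw [hcompat, x.2 g hg]
  letI ψ : fixedSubring H A →+* fixedSubring H (Localization.Away f) :=
    ((algebraMap A (Localization.Away f)).comp (Subring.subtype (fixedSubring H A))).codRestrict
      (fixedSubring H (Localization.Away f)) (fun x => hψmem x)
  letI : Algebra (fixedSubring H A) (fixedSubring H (Localization.Away f)) := ψ.toAlgebra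
  haveI hQloc : IsLocalization (Submonoid.powers fH) (fixedSubring H (Localization.Away f)) := by
    constructor
    constructor
    · rintro ⟨y, n, rfl⟩
      refine isUnit_iff_exists_inv.mpr
        ⟨⟨Localization.mk 1 (⟨f ^ n, ⟨n, rfl⟩⟩ : Submonoid.powers f),
          mkmem 1 (fun g _ => smul_one g) n⟩, ?_⟩
      apply Subtype.ext
      show algebraMap A (Localization.Away f) ((fH ^ n : fixedSubring H A) : A)
        * (Localization.mk 1 (⟨f ^ n, ⟨n, rfl⟩⟩ : Submonoid.powers f) : Localization.Away f) = 1
      have hy : ((fH ^ n : fixedSubring H A) : A) = f ^ n := rfl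
      rw [hy, mul_comm, hmkspec 1 n, map_one]
    · intro z
      obtain ⟨⟨c, s⟩, hcs⟩ := IsLocalization.surj (Submonoid.powers f)
        (z : Localization.Away f)
      dsimp only at hcs
      obtain ⟨n, hn⟩ := s.2
      have hsfix : ∀ g : G, g • (s : A) = (s : A) := by
        intro g; rw [← hn]; exact hfixpow g n
      have hcH : ∀ g ∈ H, g • c = c := by
        intro g hg
        apply injA
        rw [← hcompat, ← hcs, smul_mul', z.2 g hg, hcompat, hsfix]
      refine ⟨⟨⟨c, hcH⟩, ⟨fH ^ n, n, rfl⟩⟩, ?_⟩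
      apply Subtype.ext
      show (z : Localization.Away f)
          * algebraMap A (Localization.Away f) ((fH ^ n : fixedSubring H A) : A)
          = algebraMap A (Localization.Away f) c
      have hy : ((fH ^ n : fixedSubring H A) : A) = (s : A) := by rw [← hn]; rfl
      rw [hy, hcs]
    · intro x y h
      have h' : algebraMap A (Localization.Away f) (x : A)
          = algebraMap A (Localization.Away f) (y : A) := congrArg Subtype.val h
      exact ⟨1, by simpa using Subtype.ext (injA h')⟩
  -- tensor side is a localization of B at powers of fH
  haveI hTloc0 : IsLocalization
      (Algebra.algebraMapSubmonoid (fixedSubring H A) (Submonoid.powers fG))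
      ((fixedSubring H A) ⊗[fixedSubring (⊤ : Subgroup G) A] (Localization.Away fG)) := by
    letI : Algebra (Localization.Away fG)
        ((fixedSubring H A) ⊗[fixedSubring (⊤ : Subgroup G) A] (Localization.Away fG)) :=
      Algebra.TensorProduct.rightAlgebra
    have hp : Algebra.IsPushout (fixedSubring (⊤ : Subgroup G) A) (Localization.Away fG)
        (fixedSubring H A)
        ((fixedSubring H A) ⊗[fixedSubring (⊤ : Subgroup G) A] (Localization.Away fG)) :=
      inferInstance
    have := (isLocalizedModule_iff_isBaseChange (Submonoid.powers fG)
      (Localization.Away fG) _).mpr hp.out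
    exact isLocalizedModule_iff_isLocalization.mp this
  have hιf : algebraMap (fixedSubring (⊤ : Subgroup G) A) (fixedSubring H A) fG = fH :=
    Subtype.ext (halg fG)
  have hsub : Algebra.algebraMapSubmonoid (fixedSubring H A) (Submonoid.powers fG)
      = Submonoid.powers fH := by
    rw [Algebra.algebraMapSubmonoid, Submonoid.map_powers, hιf]
  haveI hTloc : IsLocalization (Submonoid.powers fH)
      ((fixedSubring H A) ⊗[fixedSubring (⊤ : Subgroup G) A] (Localization.Away fG)) :=
    hsub ▸ hTloc0
  refine ⟨(IsLocalization.algEquiv (Submonoid.powers fH)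
    ((fixedSubring H A) ⊗[fixedSubring (⊤ : Subgroup G) A] (Localization.Away fG))
    (fixedSubring H (Localization.Away f))).toRingEquiv, ?_⟩
  intro a b n
  have hιfn : algebraMap (fixedSubring (⊤ : Subgroup G) A) (fixedSubring H A) (fG ^ n)
      = fH ^ n := by rw [map_pow, hιf]
  have h2 : fG ^ n • Localization.mk b (⟨fG ^ n, ⟨n, rfl⟩⟩ : Submonoid.powers fG)
      = algebraMap (fixedSubring (⊤ : Subgroup G) A) (Localization.Away fG) b := by
    rw [Localization.smul_mk, Localization.mk_eq_mk', IsLocalization.mk'_eq_iff_eq_mul,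
      smul_eq_mul, map_mul, mul_comm]
  have halgT : ∀ x : fixedSubring H A,
      algebraMap (fixedSubring H A)
        ((fixedSubring H A) ⊗[fixedSubring (⊤ : Subgroup G) A] (Localization.Away fG)) x
      = x ⊗ₜ[fixedSubring (⊤ : Subgroup G) A] 1 := fun x => rfl
  have key : (a ⊗ₜ[fixedSubring (⊤ : Subgroup G) A]
        Localization.mk b (⟨fG ^ n, ⟨n, rfl⟩⟩ : Submonoid.powers fG))
      * algebraMap (fixedSubring H A)
        ((fixedSubring H A) ⊗[fixedSubring (⊤ : Subgroup G) A] (Localization.Away fG)) (fH ^ n)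
      = algebraMap (fixedSubring H A)
        ((fixedSubring H A) ⊗[fixedSubring (⊤ : Subgroup G) A] (Localization.Away fG))
        (algebraMap (fixedSubring (⊤ : Subgroup G) A) (fixedSubring H A) b * a) := by
    rw [halgT, halgT, Algebra.TensorProduct.tmul_mul_tmul, mul_one, ← hιfn, mul_comm,
      ← Algebra.smul_def, TensorProduct.smul_tmul, h2,
      Algebra.algebraMap_eq_smul_one, ← TensorProduct.smul_tmul, Algebra.smul_def]
  have hx : a ⊗ₜ[fixedSubring (⊤ : Subgroup G) A]
        Localization.mk b (⟨fG ^ n, ⟨n, rfl⟩⟩ : Submonoid.powers fG)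
      = IsLocalization.mk'
        ((fixedSubring H A) ⊗[fixedSubring (⊤ : Subgroup G) A] (Localization.Away fG))
        (algebraMap (fixedSubring (⊤ : Subgroup G) A) (fixedSubring H A) b * a)
        (⟨fH ^ n, ⟨n, rfl⟩⟩ : Submonoid.powers fH) :=
    IsLocalization.eq_mk'_iff_mul_eq.mpr key
  have hab : ∀ g ∈ H, g • ((a : A) * (b : A)) = (a : A) * (b : A) := by
    intro g hg
    rw [smul_mul', a.2 g hg, b.2 g (by trivial)]
  have hccoe : ((algebraMap (fixedSubring (⊤ : Subgroup G) A) (fixedSubring H A) b * a :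
      fixedSubring H A) : A) = (a : A) * (b : A) := by
    push_cast
    rw [halg b, mul_comm]
  have hz : (⟨Localization.mk ((a : A) * (b : A)) (⟨f ^ n, ⟨n, rfl⟩⟩ : Submonoid.powers f),
        mkmem _ hab n⟩ : fixedSubring H (Localization.Away f))
      = IsLocalization.mk' (fixedSubring H (Localization.Away f))
        (algebraMap (fixedSubring (⊤ : Subgroup G) A) (fixedSubring H A) b * a)
        (⟨fH ^ n, ⟨n, rfl⟩⟩ : Submonoid.powers fH) := by
    apply IsLocalization.eq_mk'_iff_mul_eq.mpr
    apply Subtype.ext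
    show Localization.mk ((a : A) * (b : A)) (⟨f ^ n, ⟨n, rfl⟩⟩ : Submonoid.powers f)
        * algebraMap A (Localization.Away f) ((fH ^ n : fixedSubring H A) : A)
        = algebraMap A (Localization.Away f)
          ((algebraMap (fixedSubring (⊤ : Subgroup G) A) (fixedSubring H A) b * a :
            fixedSubring H A) : A)
    have h3 : ((fH ^ n : fixedSubring H A) : A) = f ^ n := rfl
    rw [h3, hccoe]
    exact hmkspec _ n
  rw [hx]
  have h4 : (IsLocalization.algEquiv (Submonoid.powers fH)
      ((fixedSubring H A) ⊗[fixedSubring (⊤ : Subgroup G) A] (Localization.Away fG))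
      (fixedSubring H (Localization.Away f))).toRingEquiv
      (IsLocalization.mk'
        ((fixedSubring H A) ⊗[fixedSubring (⊤ : Subgroup G) A] (Localization.Away fG))
        (algebraMap (fixedSubring (⊤ : Subgroup G) A) (fixedSubring H A) b * a)
        (⟨fH ^ n, ⟨n, rfl⟩⟩ : Submonoid.powers fH))
      = IsLocalization.mk' (fixedSubring H (Localization.Away f))
        (algebraMap (fixedSubring (⊤ : Subgroup G) A) (fixedSubring H A) b * a)
        (⟨fH ^ n, ⟨n, rfl⟩⟩ : Submonoid.powers fH) :=
    IsLocalization.algEquiv_mk' _ _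
  rw [h4, ← hz]
end

section
/- Let A be a commutative integral domain equipped with an action of a group G by ring automorphisms, let H be a normal subgroup of G, and let f ∈ A be a nonzero element fixed by every element of G. The quotient group G/H acts on the fixed subring A^H by ring automorphisms (the action of a coset gH sends a to g·a, which is well defined since H fixes A^H pointwise and H is normal), and hence acts on the localization (A^H)_f by the induced action. Then the canonical ring homomorphism from (A^G)_f to (A^H)_f is injective with range exactly the (G/H)-fixed subring of (A^H)_f; in particular (A^G)_f ≅ ((A^H)_f)^{G/H} as rings. -/
/-- The subring of elements of `R` fixed by a group `Q` acting through a homomorphism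
`ρ : Q →* RingAut R`. -/
def autFixedSubring {Q : Type*} [Monoid Q] {R : Type*} [CommRing R]
    (ρ : Q →* RingAut R) : Subring R where
  carrier := {x | ∀ q : Q, ρ q x = x}
  one_mem' := fun q => map_one (ρ q)
  mul_mem' := fun {a b} ha hb q => by rw [map_mul, ha q, hb q]
  zero_mem' := fun q => map_zero (ρ q)
  add_mem' := fun {a b} ha hb q => by rw [map_add, ha q, hb q]
  neg_mem' := fun {a} ha q => by rw [map_neg, ha q]

set_option maxHeartbeats 1000000 in
set_option synthInstance.maxHeartbeats 200000 in
theorem stmt3_aux {A : Type*} [CommRing A] [IsDomain A] {G Q : Type*} [Group G] [Monoid Q]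
    [MulSemiringAction G A] (B C : Subring A) (hle : B ≤ C)
    (fB : B) (fC : C) (hfBC : (fB : A) = (fC : A)) (hf0 : (fC : A) ≠ 0)
    (hBfix : ∀ (a : B) (g : G), g • (a : A) = (a : A))
    (hCg : ∀ (c : C) (g : G), g • (c : A) ∈ C)
    (hCB : ∀ c : C, (∀ g : G, g • (c : A) = (c : A)) → (c : A) ∈ B)
    (π : G → Q) (hπ : Function.Surjective π)
    (ρ : Q →* RingAut (Localization.Away fC))
    (hρ : ∀ (g : G) (a b : C), (b : A) = g • (a : A) →
      ρ (π g) (algebraMap C (Localization.Away fC) a)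
        = algebraMap C (Localization.Away fC) b) :
    ∃ φ : Localization.Away fB →+* Localization.Away fC,
      (∀ (a : B) (b : C), (b : A) = (a : A) →
        φ (algebraMap B (Localization.Away fB) a) = algebraMap C (Localization.Away fC) b) ∧
      Function.Injective φ ∧
      φ.range = autFixedSubring ρ ∧
      Nonempty (Localization.Away fB ≃+* autFixedSubring ρ) := by
  let incl : B →+* C := Subring.inclusion hle
  let ι : C →+* Localization.Away fC := algebraMap C (Localization.Away fC)
  have hinclfB : incl fB = fC := Subtype.ext hfBC
  let v : Localization.Away fC :=
    Localization.mk 1 (⟨fC, 1, pow_one fC⟩ : Submonoid.powers fC)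
  have hv : ι fC * v = 1 := by
    show algebraMap C (Localization.Away fC) fC *
      Localization.mk 1 (⟨fC, 1, pow_one fC⟩ : Submonoid.powers fC) = 1
    rw [← Localization.mk_one_eq_algebraMap, Localization.mk_mul, mul_one, one_mul]
    exact Localization.mk_self (⟨fC, 1, pow_one fC⟩ : Submonoid.powers fC)
  have hv' : (ι.comp incl) fB * v = 1 := by
    show ι (incl fB) * v = 1
    rw [hinclfB]; exact hv
  have hu : IsUnit ((ι.comp incl) fB) := isUnit_iff_exists_inv.mpr ⟨v, hv'⟩
  have huC : IsUnit (ι fC) := IsUnit.of_mul_eq_one v hv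
  have hvu : IsUnit v := IsUnit.of_mul_eq_one (ι fC) (by rw [mul_comm]; exact hv)
  let φ : Localization.Away fB →+* Localization.Away fC :=
    Localization.awayLift (ι.comp incl) fB hu
  have hφmk : ∀ (a : B) (n : ℕ),
      φ (Localization.mk a (⟨fB ^ n, n, rfl⟩ : Submonoid.powers fB)) = ι (incl a) * v ^ n :=
    fun a n => Localization.awayLift_mk (ι.comp incl) fB a v hv' n
  have hφalg : ∀ a : B, φ (algebraMap B (Localization.Away fB) a) = ι (incl a) :=
    fun a => IsLocalization.Away.lift_eq fB hu a
  have hfC0 : fC ≠ 0 := fun h => hf0 (congrArg Subtype.val h)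
  have hιinj : Function.Injective ι :=
    IsLocalization.injective _ (powers_le_nonZeroDivisors_of_noZeroDivisors hfC0)
  have hmkrep : ∀ (c : C) (n : ℕ),
      Localization.mk c (⟨fC ^ n, n, rfl⟩ : Submonoid.powers fC) = ι c * v ^ n := by
    intro c n
    apply (huC.pow n).mul_left_cancel
    have h1 : ι fC ^ n * Localization.mk c (⟨fC ^ n, n, rfl⟩ : Submonoid.powers fC) = ι c := by
      rw [show ι fC ^ n = ι (fC ^ n) from (map_pow ι fC n).symm, mul_comm,
        Localization.mk_eq_mk'_apply]
      exact IsLocalization.mk'_spec _ c (⟨fC ^ n, n, rfl⟩ : Submonoid.powers fC)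
    rw [h1, show ι fC ^ n * (ι c * v ^ n) = ι c * (ι fC * v) ^ n by ring, hv, one_pow, mul_one]
  have hfCfix : ∀ g : G, (fC : A) = g • (fC : A) := by
    intro g; rw [← hfBC]; exact (hBfix fB g).symm
  have hρfC : ∀ q : Q, ρ q (ι fC) = ι fC := by
    intro q
    obtain ⟨g, rfl⟩ := hπ q
    exact hρ g fC fC (hfCfix g)
  have hρv : ∀ q : Q, ρ q v = v := by
    intro q
    have h1 : ι fC * ρ q v = 1 := by
      have h := congrArg (ρ q) hv
      rwa [map_mul, map_one, hρfC q] at h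
    calc ρ q v = ρ q v * (ι fC * v) := by rw [hv, mul_one]
      _ = (ι fC * ρ q v) * v := by ring
      _ = v := by rw [h1, one_mul]
  have hρB : ∀ (q : Q) (a : B), ρ q (ι (incl a)) = ι (incl a) := by
    intro q a
    obtain ⟨g, rfl⟩ := hπ q
    exact hρ g (incl a) (incl a) (hBfix a g).symm
  have hinj : Function.Injective φ := by
    rw [injective_iff_map_eq_zero]
    intro z hz
    induction z using Localization.induction_on with
    | _ p =>
      obtain ⟨a, s⟩ := p
      obtain ⟨sv, n, rfl⟩ := s
      have hz' : φ (Localization.mk a (⟨fB ^ n, n, rfl⟩ : Submonoid.powers fB)) = 0 := hz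
      rw [hφmk a n] at hz'
      have h0 : ι (incl a) = 0 := by
        rcases hvu.pow n with ⟨u, hu'⟩
        have h := congrArg (· * (↑u⁻¹ : Localization.Away fC)) hz'
        simpa [← hu', mul_assoc] using h
      have ha0 : a = 0 := by
        have h : incl a = 0 := hιinj (by simpa using h0)
        have h2 : ((incl a : C) : A) = 0 := congrArg Subtype.val h
        exact Subtype.ext h2
      show Localization.mk a (⟨fB ^ n, n, rfl⟩ : Submonoid.powers fB) = 0
      rw [ha0]
      exact Localization.mk_zero _
  have hrange : φ.range = autFixedSubring ρ := by
    apply le_antisymm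
    · rintro x ⟨z, rfl⟩ q
      induction z using Localization.induction_on with
      | _ p =>
        obtain ⟨a, s⟩ := p
        obtain ⟨sv, n, rfl⟩ := s
        show ρ q (φ (Localization.mk a (⟨fB ^ n, n, rfl⟩ : Submonoid.powers fB)))
          = φ (Localization.mk a (⟨fB ^ n, n, rfl⟩ : Submonoid.powers fB))
        rw [hφmk a n, map_mul, map_pow, hρB q a, hρv q]
    · intro x hx
      induction x using Localization.induction_on with
      | _ p =>
        obtain ⟨c, s⟩ := p
        obtain ⟨sv, n, rfl⟩ := s
        have hrep := hmkrep c n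
        have hcfix : ∀ g : G, g • (c : A) = (c : A) := by
          intro g
          have h1 : ρ (π g) (ι c) = ι (⟨g • (c : A), hCg c g⟩ : C) :=
            hρ g c ⟨g • (c : A), hCg c g⟩ rfl
          have h2 : ρ (π g) (Localization.mk c (⟨fC ^ n, n, rfl⟩ : Submonoid.powers fC))
              = Localization.mk c (⟨fC ^ n, n, rfl⟩ : Submonoid.powers fC) := hx (π g)
          rw [hrep, map_mul, map_pow, hρv, h1] at h2
          have h4 : ι (⟨g • (c : A), hCg c g⟩ : C) = ι c := (hvu.pow n).mul_right_cancel h2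
          exact congrArg Subtype.val (hιinj h4)
        refine ⟨Localization.mk ⟨(c : A), hCB c hcfix⟩
          (⟨fB ^ n, n, rfl⟩ : Submonoid.powers fB), ?_⟩
        show φ (Localization.mk ⟨(c : A), hCB c hcfix⟩
            (⟨fB ^ n, n, rfl⟩ : Submonoid.powers fB))
          = Localization.mk c (⟨fC ^ n, n, rfl⟩ : Submonoid.powers fC)
        rw [hφmk, hrep, show incl ⟨(c : A), hCB c hcfix⟩ = c from Subtype.ext rfl]
  refine ⟨φ, ?_, hinj, hrange, ?_⟩
  · intro a b hba
    have hb : incl a = b := Subtype.ext hba.symm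
    rw [hφalg a, hb]
  · have hsurj : Function.Surjective φ.rangeRestrict := φ.rangeRestrict_surjective
    have hinj' : Function.Injective φ.rangeRestrict := fun x y h =>
      hinj (Subtype.ext_iff.mp h)
    exact ⟨(RingEquiv.ofBijective φ.rangeRestrict ⟨hinj', hsurj⟩).trans
      (RingEquiv.subringCongr hrange)⟩

/-- Let `A` be a commutative integral domain with an action of a group `G` by
ring automorphisms, `H ⊴ G` a normal subgroup, and `f ≠ 0` fixed by every element of `G`.
Let `ρ` be the induced action of the quotient group `G ⧸ H` on the localization `(A^H)_f`,
characterized by `(gH) • (a / fⁿ) = (g • a) / fⁿ`.  Then the canonical ring homomorphism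
`(A^G)_f → (A^H)_f` is injective with range exactly the `(G ⧸ H)`-fixed subring of `(A^H)_f`;
in particular `(A^G)_f ≅ ((A^H)_f)^{G ⧸ H}` as rings. -/
theorem stmt_3 {A : Type*} [CommRing A] [IsDomain A] {G : Type*} [Group G]
    [MulSemiringAction G A] (H : Subgroup G) [H.Normal]
    (f : A) (hf : f ≠ 0) (hfix : ∀ g : G, g • f = f)
    (ρ : (G ⧸ H) →* RingAut (Localization.Away
      (⟨f, fun g _ => hfix g⟩ : fixedSubring H A)))
    (hρ : ∀ (g : G) (a b : fixedSubring H A), (b : A) = g • (a : A) →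
      ρ (QuotientGroup.mk g)
          (algebraMap (fixedSubring H A)
            (Localization.Away (⟨f, fun g _ => hfix g⟩ : fixedSubring H A)) a)
        = algebraMap (fixedSubring H A)
            (Localization.Away (⟨f, fun g _ => hfix g⟩ : fixedSubring H A)) b) :
    ∃ φ : Localization.Away
        (⟨f, fun g _ => hfix g⟩ : fixedSubring (⊤ : Subgroup G) A) →+*
        Localization.Away (⟨f, fun g _ => hfix g⟩ : fixedSubring H A),
      (∀ (a : fixedSubring (⊤ : Subgroup G) A) (b : fixedSubring H A), (b : A) = (a : A) →
        φ (algebraMap (fixedSubring (⊤ : Subgroup G) A)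
            (Localization.Away (⟨f, fun g _ => hfix g⟩ : fixedSubring (⊤ : Subgroup G) A)) a)
          = algebraMap (fixedSubring H A)
              (Localization.Away (⟨f, fun g _ => hfix g⟩ : fixedSubring H A)) b) ∧
      Function.Injective φ ∧
      φ.range = autFixedSubring ρ ∧
      Nonempty (Localization.Away
          (⟨f, fun g _ => hfix g⟩ : fixedSubring (⊤ : Subgroup G) A)
        ≃+* autFixedSubring ρ) := by
  refine stmt3_aux (fixedSubring (⊤ : Subgroup G) A) (fixedSubring H A)
    (fun a ha g _ => ha g trivial)
    ⟨f, fun g _ => hfix g⟩ ⟨f, fun g _ => hfix g⟩ rfl hf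
    (fun a g => a.2 g trivial)
    ?_
    (fun c h g _ => h g)
    QuotientGroup.mk QuotientGroup.mk_surjective ρ hρ
  intro c g h' hh'
  have hmem : g⁻¹ * h' * g ∈ H := by
    simpa using ‹H.Normal›.conj_mem h' hh' g⁻¹
  rw [smul_smul, show h' * g = g * (g⁻¹ * h' * g) by group, ← smul_smul, c.2 _ hmem]
end
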